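/- Let μ₃ be the triadic self-similar measure satisfying ∫ f dμ₃ = (1/2)(∫ f(x/3) dμ₃ + ∫ f(x/3 + 2/3) dμ₃). Then with λ = 3/4 and λ' = 9/4, the exponentials e_λ and e_{λ'} are each orthogonal to e₀ in L²(μ₃), but ⟨e_λ, e_{λ'}⟩_{μ₃} = μ̂₃(3/2) ≠ 0; i.e., e_λ and e_{λ'} are not orthogonal. -/

import Mathlib

open MeasureTheory Filter Topology Complex

/-!
With `charFun μ s = ∫ exp (i s x) dμ` we have `μ̂₃(t) = charFun μ (2πt)`. Testing the
self-similarity against `x ↦ exp (i s x)` gives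
`charFun μ s = (1 + e^{2is/3}) / 2 · charFun μ (s/3)`.
At `t = 3/4` and `t = 9/4` the factor is `1 + e^{iπ}` resp. `1 + e^{3iπ}`, both `0`.
At `t = 3/2` it is `1 + e^{2iπ} = 2`, so `μ̂₃(3/2) = μ̂₃(1/2)`. From `s = π` on, all
factors `1 + e^{2iπ/3ⁿ}` (`n ≥ 1`) are nonzero, so a zero at `s = π` would propagate to
zeros at `π/3ⁿ → 0`, contradicting continuity of `charFun μ` and `charFun μ 0 = 1`.
-/

theorem one_add_exp_mul_I_ne_zero {θ : ℝ} (h₀ : 0 < θ) (hπ : θ < Real.pi) :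
    1 + exp (θ * I) ≠ 0 := by
  intro h
  have him := congrArg Complex.im h
  rw [add_im, one_im, exp_ofReal_mul_I_im, zero_im, zero_add] at him
  exact (Real.sin_pos_of_pos_of_lt_pi h₀ hπ).ne' him

def IsTriadicSelfSimilar (μ : Measure ℝ) : Prop :=
  ∀ f : ℝ → ℝ, Continuous f →
    ∫ x, f x ∂μ = (1 / 2) * ((∫ x, f (x / 3) ∂μ) + ∫ x, f (x / 3 + 2 / 3) ∂μ)

namespace IsTriadicSelfSimilar

variable {μ : Measure ℝ}

theorem integral_eq_of_bounded [IsFiniteMeasure μ] (hμ : IsTriadicSelfSimilar μ) {f : ℝ → ℂ}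
    (hf : Continuous f) (C : ℝ) (hC : ∀ x, ‖f x‖ ≤ C) :
    ∫ x, f x ∂μ = (1 / 2) * ((∫ x, f (x / 3) ∂μ) + ∫ x, f (x / 3 + 2 / 3) ∂μ) := by
  have hint : ∀ g : ℝ → ℝ, Continuous g → Integrable (fun x => f (g x)) μ := fun g hg =>
    .of_bound (hf.comp hg).aestronglyMeasurable C (ae_of_all _ fun _ => hC _)
  have h₀ : Integrable f μ := hint id continuous_id
  have h₁ := hint (· / 3) (by fun_prop)
  have h₂ := hint (· / 3 + 2 / 3) (by fun_prop)
  have hre := hμ (fun x => (f x).re) (by fun_prop)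
  have him := hμ (fun x => (f x).im) (by fun_prop)
  simp only [← RCLike.re_to_complex, ← RCLike.im_to_complex, integral_re h₀, integral_re h₁,
    integral_re h₂, integral_im h₀, integral_im h₁, integral_im h₂] at hre him
  simp only [RCLike.re_to_complex, RCLike.im_to_complex] at hre him
  apply Complex.ext <;> simp [hre, him]

theorem charFun_eq_mul_charFun_div_three [IsFiniteMeasure μ] (hμ : IsTriadicSelfSimilar μ)
    (s : ℝ) :
    charFun μ s = (1 + exp (↑(2 * s / 3) * I)) / 2 * charFun μ (s / 3) := by
  have hscale : ∀ x : ℝ, exp (s * ↑(x / 3) * I) = exp (↑(s / 3) * x * I) := fun x => by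
    push_cast; ring_nf
  have hshift : ∀ x : ℝ,
      exp (s * ↑(x / 3 + 2 / 3) * I) = exp (↑(2 * s / 3) * I) * exp (↑(s / 3) * x * I) :=
    fun x => by rw [← exp_add]; push_cast; ring_nf
  rw [charFun_apply_real, hμ.integral_eq_of_bounded (f := fun x : ℝ => exp (s * x * I))
    (by fun_prop) 1 fun x => by rw [← ofReal_mul, norm_exp_ofReal_mul_I]]
  simp only [hscale, hshift, integral_const_mul, ← charFun_apply_real]
  ring

theorem charFun_eq_zero [IsFiniteMeasure μ] (hμ : IsTriadicSelfSimilar μ) {s : ℝ}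
    (hs : exp (↑(2 * s / 3) * I) = -1) : charFun μ s = 0 := by
  rw [hμ.charFun_eq_mul_charFun_div_three, hs]
  ring

theorem charFun_ne_zero [IsProbabilityMeasure μ] (hμ : IsTriadicSelfSimilar μ) {s : ℝ}
    (hs : ∀ n : ℕ, 1 + exp (↑(2 * (s / 3 ^ n) / 3) * I) ≠ 0) : charFun μ s ≠ 0 := by
  intro h
  have hzero : ∀ n : ℕ, charFun μ (s / 3 ^ n) = 0 := by
    intro n
    induction n with
    | zero => simpa using h
    | succ n ih =>
      rw [hμ.charFun_eq_mul_charFun_div_three, div_div, ← pow_succ] at ih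
      exact (mul_eq_zero.1 ih).resolve_left (div_ne_zero (hs n) two_ne_zero)
  have hlim : Tendsto (fun n : ℕ => charFun μ (s / 3 ^ n)) atTop (𝓝 (charFun μ 0)) :=
    (continuous_charFun.tendsto 0).comp
      (tendsto_const_nhds.div_atTop (tendsto_pow_atTop_atTop_of_one_lt (by norm_num)))
  simp [hzero] at hlim

end IsTriadicSelfSimilar

theorem triadic_not_orthogonal (μ : Measure ℝ) [IsProbabilityMeasure μ]
    (hμ : ∀ f : ℝ → ℝ, Continuous f →
      ∫ x, f x ∂μ =
        (1 / 2) * ((∫ x, f (x / 3) ∂μ) + ∫ x, f (x / 3 + 2 / 3) ∂μ)) :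
    (∫ x, Complex.exp ((((2 : ℝ) * Real.pi * ((3 / 4 : ℝ) * x) : ℝ) : ℂ) * Complex.I) ∂μ = 0) ∧
    (∫ x, Complex.exp ((((2 : ℝ) * Real.pi * ((9 / 4 : ℝ) * x) : ℝ) : ℂ) * Complex.I) ∂μ = 0) ∧
    (∫ x, Complex.exp ((((2 : ℝ) * Real.pi * ((3 / 2 : ℝ) * x) : ℝ) : ℂ) * Complex.I) ∂μ ≠ 0) := by
  have hμ₃ : IsTriadicSelfSimilar μ := hμ
  have hfourier : ∀ t : ℝ,
      ∫ x, exp (↑(2 * Real.pi * (t * x)) * I) ∂μ = charFun μ (2 * Real.pi * t) :=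
    fun t => by rw [charFun_apply_real]; congr with x; push_cast; ring_nf
  simp only [hfourier]
  refine ⟨hμ₃.charFun_eq_zero ?_, hμ₃.charFun_eq_zero ?_, ?_⟩
  · rw [show 2 * (2 * Real.pi * (3 / 4)) / 3 = Real.pi by ring, exp_pi_mul_I]
  · rw [show 2 * (2 * Real.pi * (9 / 4)) / 3 = Real.pi + 2 * Real.pi by ring]
    push_cast
    rw [add_mul, exp_add, exp_pi_mul_I, exp_two_pi_mul_I, neg_one_mul]
  · have hperiod : charFun μ (2 * Real.pi * (3 / 2)) = charFun μ Real.pi := by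
      rw [hμ₃.charFun_eq_mul_charFun_div_three,
        show 2 * (2 * Real.pi * (3 / 2)) / 3 = 2 * Real.pi by ring]
      push_cast
      rw [exp_two_pi_mul_I]
      ring_nf
    rw [hperiod]
    refine hμ₃.charFun_ne_zero fun n => one_add_exp_mul_I_ne_zero (by positivity) ?_
    have : Real.pi / 3 ^ n ≤ Real.pi := div_le_self Real.pi_pos.le (one_le_pow₀ (by norm_num))
    linarith [Real.pi_pos]
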